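/- Suppose the assumptions of Kuroki and Pearl (2014) hold in the discrete model: P_{Z|U,a} and P_{W|U} are invertible square matrices and some row of P_{Y|U,a} has distinct entries, for each a. Then the completeness and bridge equation assumptions of Miao et al. (2018) hold: P_{U|Z,a} has a right inverse, and there exists a matrix H_a with P_{Y|Z,a} = H_a P_{W|Z,a}. Hence the Kuroki–Pearl model is contained in the Miao et al. model. -/
import Mathlib


/-- Discrete hidden confounding model Markov to Figure 3: the Kuroki–Pearl (2014)
assumptions imply the Miao et al. (2018) completeness and bridge-equation assumptions. -/
theorem stmt_12 {n y : ℕ} {A : Type*}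
    (PZU PUZ PWZ : A → Matrix (Fin n) (Fin n) ℝ)
    (PWU : Matrix (Fin n) (Fin n) ℝ)
    (PYU PYZ : A → Matrix (Fin y) (Fin n) ℝ)
    (fU : Fin n → ℝ) (fZ : A → Fin n → ℝ)
    (hfU : ∀ u, 0 < fU u) (hfZ : ∀ a z, 0 < fZ a z)
    -- Bayes' rule linking P_{U|Z,a} and P_{Z|U,a}
    (hBayes : ∀ a u z, PUZ a u z * fZ a z = PZU a z u * fU u)
    -- Markov factorizations from the conditional independences of Figure 3
    (hWZ : ∀ a, PWZ a = PWU * PUZ a)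
    (hYZ : ∀ a, PYZ a = PYU a * PUZ a)
    -- Kuroki–Pearl assumptions: invertibility and a row with distinct entries
    (hinvZU : ∀ a, IsUnit (PZU a)) (hinvWU : IsUnit PWU)
    (hdistinct : ∀ a, ∃ i, ∀ j k : Fin n, j ≠ k → PYU a i j ≠ PYU a i k) :
    (∀ a, ∃ Q : Matrix (Fin n) (Fin n) ℝ, PUZ a * Q = 1) ∧
      (∀ a, ∃ H : Matrix (Fin y) (Fin n) ℝ, PYZ a = H * PWZ a) := by
  constructor
  · intro a
    have hfact : PUZ a =
        Matrix.diagonal fU * (PZU a).transpose * Matrix.diagonal (fun z => (fZ a z)⁻¹) := by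
      ext u z
      have h := hBayes a u z
      have hz := (hfZ a z).ne'
      simp [Matrix.mul_apply, Matrix.diagonal, Matrix.transpose,
        Finset.mul_sum, Finset.sum_mul, Finset.sum_ite_eq, Finset.sum_ite_eq']
      field_simp
      linarith [h]
    have h1 : IsUnit (Matrix.diagonal fU) := by
      rw [Matrix.isUnit_iff_isUnit_det, Matrix.det_diagonal]
      exact isUnit_iff_ne_zero.mpr (Finset.prod_ne_zero_iff.mpr fun u _ => (hfU u).ne')
    have h2 : IsUnit (PZU a).transpose := by
      rw [Matrix.isUnit_iff_isUnit_det, Matrix.det_transpose]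
      exact (Matrix.isUnit_iff_isUnit_det _).mp (hinvZU a)
    have h3 : IsUnit (Matrix.diagonal (fun z => (fZ a z)⁻¹)) := by
      rw [Matrix.isUnit_iff_isUnit_det, Matrix.det_diagonal]
      exact isUnit_iff_ne_zero.mpr (Finset.prod_ne_zero_iff.mpr fun z _ => inv_ne_zero (hfZ a z).ne')
    have : IsUnit (PUZ a) := by rw [hfact]; exact (h1.mul h2).mul h3
    obtain ⟨u, hu⟩ := this
    exact ⟨↑u⁻¹, by rw [← hu]; exact u.mul_inv⟩
  · intro a
    have hd : IsUnit PWU.det := (Matrix.isUnit_iff_isUnit_det _).mp hinvWU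
    refine ⟨PYU a * PWU⁻¹, ?_⟩
    rw [hYZ a, hWZ a, Matrix.mul_assoc, ← Matrix.mul_assoc PWU⁻¹,
      Matrix.nonsing_inv_mul _ hd, Matrix.one_mul]
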